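/- Define the binary operation ∗ on the free abelian group (over a commutative ring k of characteristic 0) on planar binary trees by the recursion t ∗ | = | ∗ t = t and t ∗ t' = t₁ ∨ (t₂ ∗ t') + (t ∗ t'₁) ∨ t'₂ for t = t₁ ∨ t₂ and t' = t'₁ ∨ t'₂, extended bilinearly. Then ∗ is associative. -/

import Mathlib

/-- Planar binary trees: `leaf` is the tree `|` with no internal vertex,
`node t₁ t₂` is the grafting `t₁ ∨ t₂`. -/
inductive PBT where
  | leaf : PBT
  | node : PBT → PBT → PBT
deriving DecidableEq

namespace PBT

/-- The order of a planar binary tree: its number of internal vertices. -/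
def order : PBT → ℕ
  | leaf => 0
  | node a b => order a + order b + 1

/-- The number of leaves of a planar binary tree. -/
def leaves : PBT → ℕ
  | leaf => 1
  | node a b => leaves a + leaves b

end PBT

/-- The Loday–Ronco product `∗` on basis trees, with values in the free `k`-module
on planar binary trees: `t ∗ | = | ∗ t = t` and
`(t₁∨t₂) ∗ (t'₁∨t'₂) = t₁ ∨ (t₂ ∗ (t'₁∨t'₂)) + ((t₁∨t₂) ∗ t'₁) ∨ t'₂`. -/
noncomputable def PBT.star (k : Type*) [CommRing k] : PBT → PBT → (PBT →₀ k)
  | .leaf, t => Finsupp.single t 1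
  | .node a b, .leaf => Finsupp.single (.node a b) 1
  | .node a b, .node c d =>
      Finsupp.mapDomain (fun u => PBT.node a u) (PBT.star k b (.node c d))
      + Finsupp.mapDomain (fun u => PBT.node u d) (PBT.star k (.node a b) c)
termination_by t s => t.order + s.order
decreasing_by all_goals simp [PBT.order]; try omega

/-- The bilinear extension of `PBT.star` to the free `k`-module `k[Y^∞]` on
planar binary trees. -/
noncomputable def PBT.starL (k : Type*) [CommRing k] (x y : PBT →₀ k) : PBT →₀ k :=
  x.sum fun t a => y.sum fun s b => (a * b) • PBT.star k t s

/-! Extend `∗` and the grafting `∨` bilinearly. For trees `t = t₁∨t₂`, `s = s₁∨s₂`,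
`u = u₁∨u₂`, unfolding the recursion on both sides gives
`(t∗s)∗u = t₁∨((t₂∗s)∗u) + (t∗s₁)∨(s₂∗u) + ((t∗s)∗u₁)∨u₂` and
`t∗(s∗u) = t₁∨(t₂∗(s∗u)) + (t∗s₁)∨(s₂∗u) + (t∗(s∗u₁))∨u₂`,
so associativity follows by induction on the total order of `(t, s, u)`. -/

open Finsupp

namespace Finsupp

variable {R α β M : Type*} [CommSemiring R] [AddCommMonoid M] [Module R M]

noncomputable def linearCombination₂ (f : α → β → M) :
    (α →₀ R) →ₗ[R] (β →₀ R) →ₗ[R] M :=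
  linearCombination R fun a => linearCombination R (f a)

@[simp]
theorem linearCombination₂_single_single (f : α → β → M) (a : α) (b : β) (r p : R) :
    linearCombination₂ f (single a r) (single b p) = (r * p) • f a b := by
  simp [linearCombination₂, mul_smul, smul_comm r p]

theorem linearCombination₂_apply (f : α → β → M) (x : α →₀ R) (y : β →₀ R) :
    linearCombination₂ f x y = x.sum fun a r => y.sum fun b p => (r * p) • f a b := by
  simp only [linearCombination₂, linearCombination_apply, LinearMap.finsupp_sum_apply,
    LinearMap.smul_apply, smul_sum, mul_smul]

theorem bilin_assoc_of_single (B : (α →₀ R) →ₗ[R] (α →₀ R) →ₗ[R] (α →₀ R))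
    (h : ∀ a b c : α, B (B (single a 1) (single b 1)) (single c 1)
      = B (single a 1) (B (single b 1) (single c 1)))
    (x y z : α →₀ R) : B (B x y) z = B x (B y z) := by
  induction x using Finsupp.induction_linear with
  | zero => simp
  | add x x' hx hx' => simp only [map_add, LinearMap.add_apply, hx, hx']
  | single a r =>
  induction y using Finsupp.induction_linear with
  | zero => simp
  | add y y' hy hy' => simp only [map_add, LinearMap.add_apply, hy, hy']
  | single b p =>
  induction z using Finsupp.induction_linear with
  | zero => simp
  | add z z' hz hz' => simp only [map_add, hz, hz']
  | single c q =>
  rw [← smul_single_one a r, ← smul_single_one b p, ← smul_single_one c q]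
  simp only [map_smul, LinearMap.smul_apply, h]

end Finsupp

namespace PBT

variable (k : Type*) [CommRing k]

noncomputable def graft : (PBT →₀ k) →ₗ[k] (PBT →₀ k) →ₗ[k] (PBT →₀ k) :=
  linearCombination₂ fun a b => single (node a b) 1

noncomputable def starBilin : (PBT →₀ k) →ₗ[k] (PBT →₀ k) →ₗ[k] (PBT →₀ k) :=
  linearCombination₂ (star k)

variable {k}

local infixr:67 " ⋎ " => graft _
local infixl:70 " ⋆ " => starBilin _

theorem single_node (a b : PBT) :
    single (node a b) (1 : k) = single a 1 ⋎ single b 1 := by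
  simp [graft]

theorem single_leaf_starBilin (y : PBT →₀ k) : single leaf 1 ⋆ y = y := by
  induction y using Finsupp.induction_linear with
  | zero => simp
  | add y y' hy hy' => simp only [map_add, hy, hy']
  | single t r => simp [starBilin, star]

theorem starBilin_single_leaf (x : PBT →₀ k) : x ⋆ single leaf 1 = x := by
  induction x using Finsupp.induction_linear with
  | zero => simp
  | add x x' hx hx' => simp only [map_add, LinearMap.add_apply, hx, hx']
  | single t r => cases t <;> simp [starBilin, star]

theorem graft_single_one (a : PBT) : graft k (single a 1) = lmapDomain k k (node a) := by
  ext; simp [graft]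

theorem graft_flip_single_one (d : PBT) :
    (graft k).flip (single d 1) = lmapDomain k k (fun u => node u d) := by
  ext; simp [graft]

theorem star_node_node (a b c d : PBT) :
    star k (node a b) (node c d)
      = single a 1 ⋎ star k b (node c d) + star k (node a b) c ⋎ single d 1 := by
  rw [star, graft_single_one, ← LinearMap.flip_apply, graft_flip_single_one]
  rfl

theorem graft_starBilin_graft (X Y Z W : PBT →₀ k) :
    (X ⋎ Y) ⋆ (Z ⋎ W) = X ⋎ (Y ⋆ (Z ⋎ W)) + ((X ⋎ Y) ⋆ Z) ⋎ W := by
  induction X using Finsupp.induction_linear with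
  | zero => simp
  | add X X' hX hX' => simp only [map_add, LinearMap.add_apply, hX, hX']; abel
  | single a r =>
  induction Y using Finsupp.induction_linear with
  | zero => simp
  | add Y Y' hY hY' => simp only [map_add, LinearMap.add_apply, hY, hY']; abel
  | single b p =>
  induction Z using Finsupp.induction_linear with
  | zero => simp
  | add Z Z' hZ hZ' => simp only [map_add, LinearMap.add_apply, hZ, hZ']; abel
  | single c q =>
  induction W using Finsupp.induction_linear with
  | zero => simp
  | add W W' hW hW' => simp only [map_add, hW, hW']; abel
  | single d s =>
  rw [← smul_single_one a r, ← smul_single_one b p, ← smul_single_one c q,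
    ← smul_single_one d s]
  simp only [map_smul, LinearMap.smul_apply, ← single_node]
  simp [starBilin, star_node_node, smul_add]

theorem starBilin_graft_starBilin_graft (X Y Z W U V : PBT →₀ k) :
    ((X ⋎ Y) ⋆ (Z ⋎ W)) ⋆ (U ⋎ V)
      = X ⋎ ((Y ⋆ (Z ⋎ W)) ⋆ (U ⋎ V)) + ((X ⋎ Y) ⋆ Z) ⋎ (W ⋆ (U ⋎ V))
        + (((X ⋎ Y) ⋆ (Z ⋎ W)) ⋆ U) ⋎ V := by
  rw [graft_starBilin_graft X Y Z W]
  simp only [map_add, LinearMap.add_apply, graft_starBilin_graft]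
  abel

theorem graft_starBilin_starBilin_graft (X Y Z W U V : PBT →₀ k) :
    (X ⋎ Y) ⋆ ((Z ⋎ W) ⋆ (U ⋎ V))
      = X ⋎ (Y ⋆ ((Z ⋎ W) ⋆ (U ⋎ V))) + ((X ⋎ Y) ⋆ Z) ⋎ (W ⋆ (U ⋎ V))
        + ((X ⋎ Y) ⋆ ((Z ⋎ W) ⋆ U)) ⋎ V := by
  rw [graft_starBilin_graft Z W U V]
  simp only [map_add, graft_starBilin_graft X Y Z,
    graft_starBilin_graft X Y _ V]
  abel

theorem starBilin_assoc_single :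
    ∀ t s u : PBT, (single t 1 ⋆ single s 1) ⋆ single u (1 : k)
      = single t 1 ⋆ (single s 1 ⋆ single u 1)
  | leaf, s, u => by simp only [single_leaf_starBilin]
  | node a b, leaf, u => by simp only [single_leaf_starBilin, starBilin_single_leaf]
  | node a b, node c d, leaf => by simp only [starBilin_single_leaf]
  | node a b, node c d, node e f => by
    have ih_right := starBilin_assoc_single b (node c d) (node e f)
    have ih_left := starBilin_assoc_single (node a b) (node c d) e
    simp only [single_node] at ih_right ih_left ⊢
    rw [starBilin_graft_starBilin_graft, graft_starBilin_starBilin_graft, ih_right, ih_left]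
termination_by t s u => t.order + s.order + u.order
decreasing_by all_goals simp only [order]; omega

theorem starL_eq_starBilin (x y : PBT →₀ k) : starL k x y = x ⋆ y := by
  rw [starL, starBilin, linearCombination₂_apply]

end PBT

theorem stmt7_general (k : Type*) [CommRing k] (x y z : PBT →₀ k) :
    PBT.starL k (PBT.starL k x y) z = PBT.starL k x (PBT.starL k y z) := by
  simp only [PBT.starL_eq_starBilin]
  exact bilin_assoc_of_single _ PBT.starBilin_assoc_single x y z

/-- The Loday–Ronco product `∗` (defined by `t ∗ | = | ∗ t = t` and
`t ∗ t' = t₁ ∨ (t₂ ∗ t') + (t ∗ t'₁) ∨ t'₂` for `t = t₁∨t₂`, `t' = t'₁∨t'₂`,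
extended bilinearly over a commutative ring `k` of characteristic `0`) is associative. -/
theorem stmt7 (k : Type*) [CommRing k] [CharZero k] (x y z : PBT →₀ k) :
    PBT.starL k (PBT.starL k x y) z = PBT.starL k x (PBT.starL k y z) :=
  stmt7_general k x y z
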